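/- arXiv:2307.05194 — 4 statements merged into one kernel-verified Lean document; each statement's English description precedes it below -/
import Mathlib

section
/- If a family of probability distributions P_D on Θ satisfies (ε, δ)-differential privacy (i.e., for all neighbouring D, D' and measurable A ⊆ Θ, P_D(A) ≤ e^ε P_{D'}(A) + δ), and Q_D is another family of distributions with total variation distance satisfying ∫|p_D(θ) - q_D(θ)|dθ ≤ γ for all D, then Q_D satisfies (ε, δ + (1 + e^ε)γ)-differential privacy. -/
open MeasureTheory

lemma abs_setIntegral_sub_setIntegral_le_integral_abs_sub {Θ : Type*} [MeasurableSpace Θ]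
    {μ : Measure Θ} {f g : Θ → ℝ} (hf : Integrable f μ) (hg : Integrable g μ) (s : Set Θ) :
    |∫ θ in s, f θ ∂μ - ∫ θ in s, g θ ∂μ| ≤ ∫ θ, |f θ - g θ| ∂μ := by
  rw [← integral_sub hf.integrableOn hg.integrableOn]
  calc |∫ θ in s, (f θ - g θ) ∂μ| ≤ ∫ θ in s, |f θ - g θ| ∂μ := abs_integral_le_integral_abs
    _ ≤ ∫ θ, |f θ - g θ| ∂μ :=
      setIntegral_le_integral (hf.sub hg).abs (.of_forall fun _ => abs_nonneg _)

theorem approximate_sampling_preserves_DP_general {Θ I : Type*} [MeasurableSpace Θ]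
    (μ : Measure Θ) (Nbr : I → I → Prop)
    (p q : I → Θ → ℝ) (ε δ γ : ℝ)
    (hDP : ∀ D D', Nbr D D' → ∀ A : Set Θ, MeasurableSet A →
      ∫ θ in A, p D θ ∂μ ≤ Real.exp ε * ∫ θ in A, p D' θ ∂μ + δ)
    (hTV : ∀ D, ∫ θ, |p D θ - q D θ| ∂μ ≤ γ)
    (hIntp : ∀ D, Integrable (p D) μ) (hIntq : ∀ D, Integrable (q D) μ) :
    ∀ D D', Nbr D D' → ∀ A : Set Θ, MeasurableSet A →
      ∫ θ in A, q D θ ∂μ ≤ Real.exp ε * ∫ θ in A, q D' θ ∂μ + (δ + (1 + Real.exp ε) * γ) := by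
  intro D D' hN A hA
  have hclose : ∀ D, |∫ θ in A, p D θ ∂μ - ∫ θ in A, q D θ ∂μ| ≤ γ := fun D =>
    (abs_setIntegral_sub_setIntegral_le_integral_abs_sub (hIntp D) (hIntq D) A).trans (hTV D)
  have hqD : ∫ θ in A, q D θ ∂μ ≤ ∫ θ in A, p D θ ∂μ + γ := by
    linarith [(abs_le.1 (hclose D)).1]
  have hpD' : ∫ θ in A, p D' θ ∂μ ≤ ∫ θ in A, q D' θ ∂μ + γ := by
    linarith [(abs_le.1 (hclose D')).2]
  calc ∫ θ in A, q D θ ∂μ ≤ Real.exp ε * ∫ θ in A, p D' θ ∂μ + δ + γ := by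
        linarith [hDP D D' hN A hA]
    _ ≤ Real.exp ε * (∫ θ in A, q D' θ ∂μ + γ) + δ + γ := by gcongr
    _ = Real.exp ε * ∫ θ in A, q D' θ ∂μ + (δ + (1 + Real.exp ε) * γ) := by ring

/-- If the family of distributions with densities `p D` is `(ε, δ)`-DP and the
family with densities `q D` is within total variation `γ` of it (`∫ |p_D - q_D| ≤ γ`),
then the `q`-family is `(ε, δ + (1 + e^ε) γ)`-DP. -/
theorem approximate_sampling_preserves_DP {Θ I : Type*} [MeasurableSpace Θ]
    (μ : Measure Θ) (Nbr : I → I → Prop)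
    (p q : I → Θ → ℝ) (ε δ γ : ℝ)
    (hp : ∀ D θ, 0 ≤ p D θ) (hq : ∀ D θ, 0 ≤ q D θ)
    (hDP : ∀ D D', Nbr D D' → ∀ A : Set Θ, MeasurableSet A →
      ∫ θ in A, p D θ ∂μ ≤ Real.exp ε * ∫ θ in A, p D' θ ∂μ + δ)
    (hTV : ∀ D, ∫ θ, |p D θ - q D θ| ∂μ ≤ γ)
    (hIntp : ∀ D, Integrable (p D) μ) (hIntq : ∀ D, Integrable (q D) μ) :
    ∀ D D', Nbr D D' → ∀ A : Set Θ, MeasurableSet A →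
      ∫ θ in A, q D θ ∂μ ≤ Real.exp ε * ∫ θ in A, q D' θ ∂μ + (δ + (1 + Real.exp ε) * γ) :=
  approximate_sampling_preserves_DP_general μ Nbr p q ε δ γ hDP hTV hIntp hIntq
end

section
/- For the logistic model f(y = 1; x, θ) = 1/(1 + exp(-m(x, θ))), where m is an arbitrary real-valued function of features and parameters, the likelihood values satisfy 0 < f(y; x, θ) < 1 for y ∈ {0,1}; consequently in a one-observation generalized posterior with β-divergence loss, the log-ratio of the unnormalized posterior under any two feature-label pairs is bounded by 1/(β − 1). -/
/-! The likelihood values are sigmoids, so they lie in `(0, 1)` and sum to `1`. The loss is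
then at most `1/β`, since `f^β ≤ f` on `[0, 1]`, and at least `-1/(β(β-1))`, by the weighted
AM-GM inequality `f^(β-1) = (f^β)^((β-1)/β) · 1^(1/β) ≤ ((β-1) f^β + 1)/β`. The log-ratio of
the two unnormalized posteriors is the difference of the losses, hence at most
`1/β + 1/(β(β-1)) = 1/(β-1)`. -/

open Real

/-- Logistic classification model mass function: `f(1;x,θ) = 1/(1+exp(-m(x,θ)))`,
`f(0;x,θ) = 1 - f(1;x,θ)`. -/
noncomputable def logisticF {X Θ : Type*} (m : X → Θ → ℝ) (y : Bool) (x : X) (θ : Θ) : ℝ :=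
  if y then 1 / (1 + Real.exp (-(m x θ))) else 1 - 1 / (1 + Real.exp (-(m x θ)))

/-- β-divergence loss for the logistic classification model. -/
noncomputable def logisticBetaLoss {X Θ : Type*} (m : X → Θ → ℝ) (β : ℝ)
    (y : Bool) (x : X) (θ : Θ) : ℝ :=
  -(logisticF m y x θ) ^ (β - 1) / (β - 1) +
    (1 / β) * ((logisticF m false x θ) ^ β + (logisticF m true x θ) ^ β)

namespace Real

theorem mul_rpow_sub_one_le {β f : ℝ} (hβ : 1 ≤ β) (hf : 0 ≤ f) :
    β * f ^ (β - 1) ≤ (β - 1) * f ^ β + 1 := by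
  have hβ0 : 0 < β := by linarith
  have amgm := geom_mean_le_arith_mean2_weighted (p₂ := 1)
    (div_nonneg (sub_nonneg.2 hβ) hβ0.le) (one_div_nonneg.2 hβ0.le) (rpow_nonneg hf β)
    zero_le_one (by field_simp; ring)
  rw [one_rpow, mul_one, ← rpow_mul hf, mul_div_cancel₀ _ hβ0.ne'] at amgm
  calc β * f ^ (β - 1) ≤ β * ((β - 1) / β * f ^ β + 1 / β * 1) := by gcongr
    _ = (β - 1) * f ^ β + 1 := by field_simp

theorem neg_inv_mul_sub_one_le {β f : ℝ} (hβ : 1 < β) (hf : 0 ≤ f) :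
    -(1 / (β * (β - 1))) ≤ -f ^ (β - 1) / (β - 1) + f ^ β / β := by
  have hq : 0 < β - 1 := by linarith
  have key := mul_rpow_sub_one_le hβ.le hf
  calc -(1 / (β * (β - 1))) = -1 / ((β - 1) * β) := by ring
    _ ≤ (-f ^ (β - 1) * β + (β - 1) * f ^ β) / ((β - 1) * β) := by gcongr; linarith
    _ = -f ^ (β - 1) / (β - 1) + f ^ β / β := (div_add_div _ _ hq.ne' (by positivity)).symm

end Real

section Logistic

variable {X Θ : Type*} (m : X → Θ → ℝ)

theorem logisticF_true (x : X) (θ : Θ) : logisticF m true x θ = sigmoid (m x θ) := by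
  simp [logisticF, sigmoid_def]

theorem logisticF_false (x : X) (θ : Θ) : logisticF m false x θ = sigmoid (-m x θ) := by
  rw [sigmoid_neg, sigmoid_def]
  simp [logisticF]

theorem logisticF_pos (y : Bool) (x : X) (θ : Θ) : 0 < logisticF m y x θ := by
  cases y
  · exact logisticF_false m x θ ▸ sigmoid_pos _
  · exact logisticF_true m x θ ▸ sigmoid_pos _

theorem logisticF_lt_one (y : Bool) (x : X) (θ : Θ) : logisticF m y x θ < 1 := by
  cases y
  · exact logisticF_false m x θ ▸ sigmoid_lt_one _
  · exact logisticF_true m x θ ▸ sigmoid_lt_one _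

theorem logisticF_false_add_true (x : X) (θ : Θ) :
    logisticF m false x θ + logisticF m true x θ = 1 := by
  rw [logisticF_false, logisticF_true, sigmoid_neg, sub_add_cancel]

theorem logisticBetaLoss_le {β : ℝ} (hβ : 1 < β) (y : Bool) (x : X) (θ : Θ) :
    logisticBetaLoss m β y x θ ≤ 1 / β := by
  have hpow (b : Bool) : logisticF m b x θ ^ β ≤ logisticF m b x θ :=
    rpow_le_self_of_le_one (logisticF_pos m b x θ).le (logisticF_lt_one m b x θ).le hβ.le
  have hlik : 0 ≤ logisticF m y x θ ^ (β - 1) / (β - 1) :=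
    div_nonneg (rpow_nonneg (logisticF_pos m y x θ).le _) (by linarith)
  have hsum := logisticF_false_add_true m x θ
  unfold logisticBetaLoss
  calc _ ≤ 0 + 1 / β * 1 := by
        rw [neg_div]
        gcongr
        · linarith
        · linarith [hpow false, hpow true]
    _ = 1 / β := by ring

theorem neg_inv_mul_sub_one_le_logisticBetaLoss {β : ℝ} (hβ : 1 < β) (y : Bool) (x : X)
    (θ : Θ) : -(1 / (β * (β - 1))) ≤ logisticBetaLoss m β y x θ := by
  have hpow (b : Bool) : 0 ≤ logisticF m b x θ ^ β :=
    rpow_nonneg (logisticF_pos m b x θ).le β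
  have hy : logisticF m y x θ ^ β ≤ logisticF m false x θ ^ β + logisticF m true x θ ^ β := by
    cases y
    · linarith [hpow true]
    · linarith [hpow false]
  calc _ ≤ -logisticF m y x θ ^ (β - 1) / (β - 1) + logisticF m y x θ ^ β / β :=
        neg_inv_mul_sub_one_le hβ (logisticF_pos m y x θ).le
    _ ≤ logisticBetaLoss m β y x θ := by
        unfold logisticBetaLoss
        rw [one_div_mul_eq_div]
        gcongr

end Logistic

/-- For the logistic model the likelihood values lie strictly between 0 and 1;
consequently the log-ratio of the unnormalized β-divergence posterior with a single
observation, under any two feature-label pairs, is bounded by `1/(β-1)`. -/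
theorem logistic_betaD_bounds {X Θ : Type*} (m : X → Θ → ℝ) (β : ℝ) (hβ : 1 < β)
    (pr : Θ → ℝ) (hpr : ∀ θ, 0 < pr θ) :
    (∀ (y : Bool) (x : X) (θ : Θ), 0 < logisticF m y x θ ∧ logisticF m y x θ < 1) ∧
    (∀ (y y' : Bool) (x x' : X) (θ : Θ),
      Real.log ((pr θ * Real.exp (-(logisticBetaLoss m β y x θ))) /
          (pr θ * Real.exp (-(logisticBetaLoss m β y' x' θ)))) ≤ 1 / (β - 1)) := by
  refine ⟨fun y x θ => ⟨logisticF_pos m y x θ, logisticF_lt_one m y x θ⟩, ?_⟩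
  intro y y' x x' θ
  rw [mul_div_mul_left _ _ (hpr θ).ne', ← exp_sub, log_exp]
  have hlower := neg_inv_mul_sub_one_le_logisticBetaLoss m hβ y x θ
  have hupper := logisticBetaLoss_le m hβ y' x' θ
  have hsplit : 1 / (β * (β - 1)) + 1 / β = 1 / (β - 1) := by
    field_simp [show β - 1 ≠ 0 by linarith]
    ring
  linarith
end

section
/- For the Gaussian regression model f(y; x, θ, σ²) = N(y; m(x,θ), σ²) with σ² ≥ s² > 0, a single sample from the β-divergence generalized Bayes posterior (β > 1) is (ε, 0)-differentially private with ε = 2/((β−1)(√(2π) s)^{β−1}). -/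
/-!
The β-loss of the Gaussian model is `-f^(β-1)/(β-1)` plus a term that does not depend on the
observation, because `∫ f(z)^β dz` is translation invariant in the mean. Since
`0 ≤ f ≤ (√(2π) s)⁻¹` when `σ² ≥ s²`, changing one observation changes the total loss by at
most `c = ((β-1)(√(2π) s)^(β-1))⁻¹` on the support of the prior. The unnormalised posterior
densities of neighbouring datasets are therefore within a factor `e^c` of each other, and
taking the ratio of the mass of `A` to the normalising constant costs this factor twice.
-/

open Real MeasureTheory

/-- Gaussian density with mean `μ` and variance `v`. -/
noncomputable def gaussDens (y μ v : ℝ) : ℝ :=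
  (1 / Real.sqrt (2 * Real.pi * v)) * Real.exp (-(y - μ) ^ 2 / (2 * v))

/-- β-divergence loss for the Gaussian regression model with mean function `m`,
parameter `θ` and variance `v`. -/
noncomputable def gaussBetaLoss {X Θ : Type*} (m : X → Θ → ℝ) (β : ℝ)
    (d : ℝ × X) (p : Θ × ℝ) : ℝ :=
  -(gaussDens d.1 (m d.2 p.1) p.2) ^ (β - 1) / (β - 1) +
    (1 / β) * ∫ z : ℝ, (gaussDens z (m d.2 p.1) p.2) ^ β

lemma gaussDens_nonneg (y μ v : ℝ) : 0 ≤ gaussDens y μ v := by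
  unfold gaussDens; positivity

lemma gaussDens_eq_sub_mean (y μ v : ℝ) : gaussDens y μ v = gaussDens (y - μ) 0 v := by
  simp [gaussDens]

lemma integral_gaussDens_rpow_mean_indep (μ₁ μ₂ v β : ℝ) :
    ∫ z, gaussDens z μ₁ v ^ β = ∫ z, gaussDens z μ₂ v ^ β := by
  have centre (μ : ℝ) : ∫ z, gaussDens z μ v ^ β = ∫ z, gaussDens z 0 v ^ β := by
    simp_rw [gaussDens_eq_sub_mean _ μ]
    exact integral_sub_right_eq_self (fun z => gaussDens z 0 v ^ β) μ
  rw [centre μ₁, centre μ₂]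

lemma gaussDens_le_of_sq_le {s v : ℝ} (y μ : ℝ) (hs : 0 < s) (hv : s ^ 2 ≤ v) :
    gaussDens y μ v ≤ (√(2 * π) * s)⁻¹ := by
  have hexp : exp (-(y - μ) ^ 2 / (2 * v)) ≤ 1 :=
    exp_le_one_iff.mpr (div_nonpos_of_nonpos_of_nonneg (by nlinarith) (by nlinarith))
  have hsqrt : √(2 * π) * s ≤ √(2 * π * v) := by
    rw [sqrt_mul' _ (by nlinarith : 0 ≤ v), ← sqrt_sq hs.le]
    gcongr
  calc gaussDens y μ v ≤ 1 / √(2 * π * v) :=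
        mul_le_of_le_one_right (by positivity) hexp
    _ ≤ (√(2 * π) * s)⁻¹ := by
        rw [one_div]; exact inv_anti₀ (by positivity) hsqrt

section BetaLoss

variable {X Θ : Type*} (m : X → Θ → ℝ) {β : ℝ}

lemma gaussBetaLoss_sub_gaussBetaLoss (d d' : ℝ × X) (p : Θ × ℝ) :
    gaussBetaLoss m β d p - gaussBetaLoss m β d' p =
      (gaussDens d'.1 (m d'.2 p.1) p.2 ^ (β - 1) - gaussDens d.1 (m d.2 p.1) p.2 ^ (β - 1)) /
        (β - 1) := by
  unfold gaussBetaLoss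
  rw [integral_gaussDens_rpow_mean_indep (m d.2 p.1) (m d'.2 p.1)]
  ring

lemma gaussBetaLoss_sub_le {s : ℝ} (hβ : 1 < β) (hs : 0 < s) (d d' : ℝ × X) {p : Θ × ℝ}
    (hp : s ^ 2 ≤ p.2) :
    gaussBetaLoss m β d p - gaussBetaLoss m β d' p ≤
      ((β - 1) * (√(2 * π) * s) ^ (β - 1))⁻¹ := by
  have hβ1 : 0 < β - 1 := sub_pos.mpr hβ
  have hd : 0 ≤ gaussDens d.1 (m d.2 p.1) p.2 ^ (β - 1) :=
    rpow_nonneg (gaussDens_nonneg _ _ _) _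
  have hd' : gaussDens d'.1 (m d'.2 p.1) p.2 ^ (β - 1) ≤ ((√(2 * π) * s) ^ (β - 1))⁻¹ := by
    rw [← inv_rpow (by positivity)]
    exact rpow_le_rpow (gaussDens_nonneg _ _ _) (gaussDens_le_of_sq_le _ _ hs hp) hβ1.le
  rw [gaussBetaLoss_sub_gaussBetaLoss, mul_inv, div_eq_inv_mul]
  exact mul_le_mul_of_nonneg_left (by linarith) (inv_nonneg.mpr hβ1.le)

end BetaLoss

lemma exp_neg_sum_le_exp_mul {ι Y : Type*} [Fintype ι] (ℓ : Y → ℝ) {D D' : ι → Y} {j : ι}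
    (hsame : ∀ i, i ≠ j → D i = D' i) {c : ℝ} (hc : ℓ (D j) - ℓ (D' j) ≤ c) :
    exp (-∑ i, ℓ (D' i)) ≤ exp c * exp (-∑ i, ℓ (D i)) := by
  have hsum : ∑ i, ℓ (D i) - ∑ i, ℓ (D' i) = ℓ (D j) - ℓ (D' j) := by
    rw [← Finset.sum_sub_distrib]
    exact Finset.sum_eq_single j (fun i _ hij => by rw [hsame i hij, sub_self])
      (fun h => absurd (Finset.mem_univ j) h)
  rw [← exp_add]
  exact exp_le_exp.mpr (by linarith)

lemma setIntegral_div_integral_le_mul {α : Type*} [MeasurableSpace α] {μ : Measure α}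
    {f g : α → ℝ} {a b : ℝ} (A : Set α) (ha : 0 ≤ a) (hg : 0 ≤ᵐ[μ] g)
    (hf_int : Integrable f μ) (hg_int : Integrable g μ)
    (hfg : ∀ᵐ x ∂μ, f x ≤ a * g x) (hgf : ∀ᵐ x ∂μ, g x ≤ b * f x)
    (hf_pos : 0 < ∫ x, f x ∂μ) (hg_pos : 0 < ∫ x, g x ∂μ) :
    (∫ x in A, f x ∂μ) / (∫ x, f x ∂μ) ≤ a * b * ((∫ x in A, g x ∂μ) / (∫ x, g x ∂μ)) := by
  have hnum : ∫ x in A, f x ∂μ ≤ a * ∫ x in A, g x ∂μ := by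
    rw [← integral_const_mul]
    exact integral_mono_ae hf_int.restrict (hg_int.restrict.const_mul a) (ae_restrict_of_ae hfg)
  have hden : ∫ x, g x ∂μ ≤ b * ∫ x, f x ∂μ := by
    rw [← integral_const_mul]
    exact integral_mono_ae hg_int (hf_int.const_mul b) hgf
  have hgA : 0 ≤ ∫ x in A, g x ∂μ := integral_nonneg_of_ae (ae_restrict_of_ae hg)
  rw [← mul_div_assoc, div_le_div_iff₀ hf_pos hg_pos]
  calc (∫ x in A, f x ∂μ) * ∫ x, g x ∂μ
      ≤ (a * ∫ x in A, g x ∂μ) * (b * ∫ x, f x ∂μ) :=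
        mul_le_mul hnum hden hg_pos.le (mul_nonneg ha hgA)
    _ = a * b * (∫ x in A, g x ∂μ) * ∫ x, f x ∂μ := by ring

lemma prior_mul_exp_neg_sum_gaussBetaLoss_le {X Θ : Type*} (m : X → Θ → ℝ) {β s : ℝ}
    (hβ : 1 < β) (hs : 0 < s) {pr : Θ × ℝ → ℝ} (hπ : ∀ p, 0 ≤ pr p)
    (hsupp : ∀ p : Θ × ℝ, p.2 < s ^ 2 → pr p = 0) {ι : Type*} [Fintype ι] {D D' : ι → ℝ × X}
    {j : ι}
    (hsame : ∀ i, i ≠ j → D i = D' i) (p : Θ × ℝ) :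
    pr p * exp (-∑ i, gaussBetaLoss m β (D' i) p) ≤
      exp ((β - 1) * (√(2 * π) * s) ^ (β - 1))⁻¹ *
        (pr p * exp (-∑ i, gaussBetaLoss m β (D i) p)) := by
  rcases lt_or_ge p.2 (s ^ 2) with hp | hp
  · simp [hsupp p hp]
  · rw [mul_left_comm]
    exact mul_le_mul_of_nonneg_left (exp_neg_sum_le_exp_mul (gaussBetaLoss m β · p) hsame
      (gaussBetaLoss_sub_le m hβ hs _ _ hp)) (hπ p)

theorem gaussian_regression_betaD_DP_general {X Θ : Type*} [MeasurableSpace Θ]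
    (μ : Measure (Θ × ℝ)) (m : X → Θ → ℝ) (β s : ℝ) (hβ : 1 < β) (hs : 0 < s)
    (pr : Θ × ℝ → ℝ) (hπ : ∀ p, 0 ≤ pr p)
    (hsupp : ∀ p : Θ × ℝ, p.2 < s ^ 2 → pr p = 0)
    (n : ℕ) (D D' : Fin n → ℝ × X) (j : Fin n)
    (hsame : ∀ i, i ≠ j → D i = D' i)
    (hInt : ∀ E : Fin n → ℝ × X,
      Integrable (fun p => pr p * Real.exp (-(∑ i, gaussBetaLoss m β (E i) p))) μ)
    (hZD : 0 < ∫ p, pr p * Real.exp (-(∑ i, gaussBetaLoss m β (D i) p)) ∂μ)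
    (hZD' : 0 < ∫ p, pr p * Real.exp (-(∑ i, gaussBetaLoss m β (D' i) p)) ∂μ) :
    ∀ A : Set (Θ × ℝ), MeasurableSet A →
      (∫ p in A, pr p * Real.exp (-(∑ i, gaussBetaLoss m β (D i) p)) ∂μ) /
          (∫ p, pr p * Real.exp (-(∑ i, gaussBetaLoss m β (D i) p)) ∂μ) ≤
        Real.exp (2 / ((β - 1) * (Real.sqrt (2 * Real.pi) * s) ^ (β - 1))) *
          ((∫ p in A, pr p * Real.exp (-(∑ i, gaussBetaLoss m β (D' i) p)) ∂μ) /
            (∫ p, pr p * Real.exp (-(∑ i, gaussBetaLoss m β (D' i) p)) ∂μ)) := by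
  intro A _
  have hexp : exp (2 / ((β - 1) * (√(2 * π) * s) ^ (β - 1))) =
      exp ((β - 1) * (√(2 * π) * s) ^ (β - 1))⁻¹ *
        exp ((β - 1) * (√(2 * π) * s) ^ (β - 1))⁻¹ := by
    rw [← exp_add, div_eq_mul_inv, two_mul]
  rw [hexp]
  exact setIntegral_div_integral_le_mul A (exp_pos _).le
    (ae_of_all μ fun p => mul_nonneg (hπ p) (exp_pos _).le) (hInt D) (hInt D')
    (ae_of_all μ <|
      prior_mul_exp_neg_sum_gaussBetaLoss_le m hβ hs hπ hsupp fun i hi => (hsame i hi).symm)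
    (ae_of_all μ <| prior_mul_exp_neg_sum_gaussBetaLoss_le m hβ hs hπ hsupp hsame)
    hZD hZD'

/-- A single sample from the β-divergence generalized Bayes posterior for Gaussian
regression with variance bounded below by `s² > 0` is `(ε, 0)`-differentially private
with `ε = 2/((β-1)(√(2π) s)^(β-1))`. -/
theorem gaussian_regression_betaD_DP {X Θ : Type*} [MeasurableSpace Θ]
    (μ : Measure (Θ × ℝ)) (m : X → Θ → ℝ) (β s : ℝ) (hβ : 1 < β) (hs : 0 < s)
    (pr : Θ × ℝ → ℝ) (hπ : ∀ p, 0 ≤ pr p)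
    (hsupp : ∀ p : Θ × ℝ, p.2 < s ^ 2 → pr p = 0)
    (n : ℕ) (D D' : Fin n → ℝ × X) (j : Fin n)
    (hneq : D j ≠ D' j) (hsame : ∀ i, i ≠ j → D i = D' i)
    (hInt : ∀ E : Fin n → ℝ × X,
      Integrable (fun p => pr p * Real.exp (-(∑ i, gaussBetaLoss m β (E i) p))) μ)
    (hZD : 0 < ∫ p, pr p * Real.exp (-(∑ i, gaussBetaLoss m β (D i) p)) ∂μ)
    (hZD' : 0 < ∫ p, pr p * Real.exp (-(∑ i, gaussBetaLoss m β (D' i) p)) ∂μ) :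
    ∀ A : Set (Θ × ℝ), MeasurableSet A →
      (∫ p in A, pr p * Real.exp (-(∑ i, gaussBetaLoss m β (D i) p)) ∂μ) /
          (∫ p, pr p * Real.exp (-(∑ i, gaussBetaLoss m β (D i) p)) ∂μ) ≤
        Real.exp (2 / ((β - 1) * (Real.sqrt (2 * Real.pi) * s) ^ (β - 1))) *
          ((∫ p in A, pr p * Real.exp (-(∑ i, gaussBetaLoss m β (D' i) p)) ∂μ) /
            (∫ p, pr p * Real.exp (-(∑ i, gaussBetaLoss m β (D' i) p)) ∂μ)) :=
  gaussian_regression_betaD_DP_general μ m β s hβ hs pr hπ hsupp n D D' j hsame hInt hZD hZD'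
end

section
/- In the Gibbs (tempered) posterior with weight w > 0 and log-likelihood bounded in absolute value by B (sup over data and parameters), one sample from π^(w)(θ|D) ∝ π(θ) exp(w Σ_i log f(D_i;θ)) is (4wB, 0)-differentially private; in particular w = ε/(4B) gives (ε, 0)-DP. -/
open Real MeasureTheory

/-!
Changing one data point moves the log-likelihood sum `∑ᵢ log f(Dᵢ;θ)` by at most `2B`, so the
unnormalised Gibbs densities of neighbouring datasets are within a factor `exp (2wB)` of each
other at every `θ`. Integrating, both the mass of a set `A` and the normalising constant change
by at most that factor, and the normalised probability of `A` by at most its square `exp (4wB)`.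
-/

lemma Fintype.sum_sub_sum_eq_of_eq_of_ne {ι G : Type*} [Fintype ι] [AddCommGroup G]
    {a b : ι → G} (j : ι) (h : ∀ i, i ≠ j → a i = b i) :
    ∑ i, a i - ∑ i, b i = a j - b j := by
  rw [← Finset.sum_sub_distrib, Fintype.sum_eq_single j]
  intro i hi
  rw [h i hi, sub_self]

/-- No positivity of `Z`, `Z'` is needed: the mutual bounds make them vanish together, and then
both sides are the junk value `x / 0 = 0`. -/
lemma div_le_mul_mul_div_of_le_mul {a a' Z Z' c : ℝ} (hc : 0 ≤ c) (ha' : 0 ≤ a')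
    (hZ : 0 ≤ Z) (hZ' : 0 ≤ Z') (ha : a ≤ c * a') (hZZ' : Z ≤ c * Z') (hZ'Z : Z' ≤ c * Z) :
    a / Z ≤ c * c * (a' / Z') := by
  rcases hZ.eq_or_lt with rfl | hZpos
  · simpa using mul_nonneg (mul_nonneg hc hc) (div_nonneg ha' hZ')
  have hZ'pos : 0 < Z' := by
    by_contra! hZ'
    nlinarith
  have hinv : 1 / Z ≤ c / Z' := by
    rw [div_le_div_iff₀ hZpos hZ'pos]
    linarith
  calc a / Z ≤ c * a' / Z := by gcongr
    _ = c * a' * (1 / Z) := by ring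
    _ ≤ c * a' * (c / Z') := mul_le_mul_of_nonneg_left hinv (mul_nonneg hc ha')
    _ = c * c * (a' / Z') := by ring

section Integral

variable {Θ : Type*} [MeasurableSpace Θ] {μ : Measure Θ}

lemma setIntegral_div_integral_le_of_le_mul {g g' : Θ → ℝ} {c : ℝ} (hc : 0 ≤ c)
    (hg : Integrable g μ) (hg' : Integrable g' μ) (hg_nonneg : ∀ θ, 0 ≤ g θ)
    (hg'_nonneg : ∀ θ, 0 ≤ g' θ)
    (hgg' : ∀ θ, g θ ≤ c * g' θ) (hg'g : ∀ θ, g' θ ≤ c * g θ) (A : Set Θ) :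
    (∫ θ in A, g θ ∂μ) / (∫ θ, g θ ∂μ) ≤
      c * c * ((∫ θ in A, g' θ ∂μ) / ∫ θ, g' θ ∂μ) := by
  apply div_le_mul_mul_div_of_le_mul hc (integral_nonneg hg'_nonneg)
    (integral_nonneg hg_nonneg) (integral_nonneg hg'_nonneg)
  · rw [← integral_const_mul]
    exact integral_mono hg.restrict (hg'.restrict.const_mul c) hgg'
  · rw [← integral_const_mul]
    exact integral_mono hg (hg'.const_mul c) hgg'
  · rw [← integral_const_mul]
    exact integral_mono hg' (hg.const_mul c) hg'g

end Integral

section Gibbs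

variable {Θ 𝒟 ι : Type*} [Fintype ι]

noncomputable def gibbsDensity (pr : Θ → ℝ) (f : 𝒟 → Θ → ℝ) (w : ℝ) (E : ι → 𝒟) (θ : Θ) : ℝ :=
  pr θ * exp (w * ∑ i, log (f (E i) θ))

lemma gibbsDensity_nonneg {pr : Θ → ℝ} (hpr : ∀ θ, 0 ≤ pr θ) (f : 𝒟 → Θ → ℝ) (w : ℝ)
    (E : ι → 𝒟) (θ : Θ) : 0 ≤ gibbsDensity pr f w E θ :=
  mul_nonneg (hpr θ) (exp_pos _).le

lemma gibbsDensity_le_exp_mul {pr : Θ → ℝ} (hpr : ∀ θ, 0 ≤ pr θ) {f : 𝒟 → Θ → ℝ} {B w : ℝ}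
    (hw : 0 ≤ w) (hB : ∀ x θ, |log (f x θ)| ≤ B) {E E' : ι → 𝒟} (j : ι)
    (hEE' : ∀ i, i ≠ j → E i = E' i) (θ : Θ) :
    gibbsDensity pr f w E θ ≤ exp (2 * w * B) * gibbsDensity pr f w E' θ := by
  have hsum : ∑ i, log (f (E i) θ) - ∑ i, log (f (E' i) θ) ≤ 2 * B := by
    rw [Fintype.sum_sub_sum_eq_of_eq_of_ne j fun i hi => by rw [hEE' i hi]]
    linarith [(abs_le.mp (hB (E j) θ)).2, (abs_le.mp (hB (E' j) θ)).1]
  have hexp : exp (w * ∑ i, log (f (E i) θ)) ≤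
      exp (2 * w * B) * exp (w * ∑ i, log (f (E' i) θ)) := by
    rw [← exp_add, exp_le_exp]
    nlinarith
  calc gibbsDensity pr f w E θ
      ≤ pr θ * (exp (2 * w * B) * exp (w * ∑ i, log (f (E' i) θ))) :=
        mul_le_mul_of_nonneg_left hexp (hpr θ)
    _ = exp (2 * w * B) * gibbsDensity pr f w E' θ := by unfold gibbsDensity; ring

end Gibbs

theorem gibbs_posterior_DP_general {Θ 𝒟 : Type*} [MeasurableSpace Θ]
    (μ : Measure Θ) (pr : Θ → ℝ) (hpr : ∀ θ, 0 ≤ pr θ)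
    (f : 𝒟 → Θ → ℝ) (B w : ℝ) (hw : 0 < w)
    (hB : ∀ (x : 𝒟) (θ : Θ), |Real.log (f x θ)| ≤ B)
    (n : ℕ) (D D' : Fin n → 𝒟) (j : Fin n)
    (hsame : ∀ i, i ≠ j → D i = D' i)
    (hInt : ∀ E : Fin n → 𝒟,
      Integrable (fun θ => pr θ * Real.exp (w * ∑ i, Real.log (f (E i) θ))) μ) :
    ∀ A : Set Θ, MeasurableSet A →
      (∫ θ in A, pr θ * Real.exp (w * ∑ i, Real.log (f (D i) θ)) ∂μ) /
          (∫ θ, pr θ * Real.exp (w * ∑ i, Real.log (f (D i) θ)) ∂μ) ≤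
        Real.exp (4 * w * B) *
          ((∫ θ in A, pr θ * Real.exp (w * ∑ i, Real.log (f (D' i) θ)) ∂μ) /
            (∫ θ, pr θ * Real.exp (w * ∑ i, Real.log (f (D' i) θ)) ∂μ)) := by
  intro A _
  have hexp : exp (4 * w * B) = exp (2 * w * B) * exp (2 * w * B) := by
    rw [← exp_add]; ring_nf
  rw [hexp]
  exact setIntegral_div_integral_le_of_le_mul (exp_pos _).le (hInt D) (hInt D')
    (gibbsDensity_nonneg hpr f w D) (gibbsDensity_nonneg hpr f w D')
    (gibbsDensity_le_exp_mul hpr hw.le hB j hsame)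
    (gibbsDensity_le_exp_mul hpr hw.le hB j fun i hi => (hsame i hi).symm) A

/-- One sample from the Gibbs (tempered) posterior
`pr^(w)(θ|D) ∝ pr(θ) exp(w ∑ᵢ log f(Dᵢ;θ))` with weight `w > 0` and log-likelihood
bounded by `B` is `(4wB, 0)`-differentially private. -/
theorem gibbs_posterior_DP {Θ 𝒟 : Type*} [MeasurableSpace Θ]
    (μ : Measure Θ) (pr : Θ → ℝ) (hpr : ∀ θ, 0 ≤ pr θ)
    (f : 𝒟 → Θ → ℝ) (B w : ℝ) (hw : 0 < w)
    (hB : ∀ (x : 𝒟) (θ : Θ), |Real.log (f x θ)| ≤ B)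
    (n : ℕ) (D D' : Fin n → 𝒟) (j : Fin n)
    (hneq : D j ≠ D' j) (hsame : ∀ i, i ≠ j → D i = D' i)
    (hInt : ∀ E : Fin n → 𝒟,
      Integrable (fun θ => pr θ * Real.exp (w * ∑ i, Real.log (f (E i) θ))) μ)
    (hZD : 0 < ∫ θ, pr θ * Real.exp (w * ∑ i, Real.log (f (D i) θ)) ∂μ)
    (hZD' : 0 < ∫ θ, pr θ * Real.exp (w * ∑ i, Real.log (f (D' i) θ)) ∂μ) :
    ∀ A : Set Θ, MeasurableSet A →
      (∫ θ in A, pr θ * Real.exp (w * ∑ i, Real.log (f (D i) θ)) ∂μ) /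
          (∫ θ, pr θ * Real.exp (w * ∑ i, Real.log (f (D i) θ)) ∂μ) ≤
        Real.exp (4 * w * B) *
          ((∫ θ in A, pr θ * Real.exp (w * ∑ i, Real.log (f (D' i) θ)) ∂μ) /
            (∫ θ, pr θ * Real.exp (w * ∑ i, Real.log (f (D' i) θ)) ∂μ)) :=
  gibbs_posterior_DP_general μ pr hpr f B w hw hB n D D' j hsame hInt
end
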